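/- Let K be an algebraically closed field and n ≥ 1. Let σ be an effective regular action of T_n = (K^×)^n on F_n = FreeAlgebra K (Fin n) that lifts the standard torus action on the polynomial algebra: for every t ∈ (Kˣ)^n and every i, the element σ(t)(z_i) − t_i • z_i lies in the commutator ideal ker ε_n. Then σ is conjugate to the standard action: there exists a K-algebra automorphism β of F_n such that (β⁻¹ ∘ σ(t) ∘ β)(z_i) = t_i • z_i for all t and i. -/

import Mathlib

open FreeAlgebra

/-- A torus action `σ` of `(Kˣ)^r` on the free algebra is *regular* if the image of each
generator depends on `t` as a Laurent polynomial with coefficients in the free algebra. -/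
def TorusActionIsRegular {K : Type} [Field K] {n r : ℕ}
    (σ : (Fin r → Kˣ) →* (FreeAlgebra K (Fin n) ≃ₐ[K] FreeAlgebra K (Fin n))) : Prop :=
  ∀ i : Fin n, ∃ a : ((Fin r → ℤ) →₀ FreeAlgebra K (Fin n)),
    ∀ t : Fin r → Kˣ,
      σ t (ι K i) = a.sum fun m c => ((∏ j : Fin r, (t j) ^ (m j) : Kˣ) : K) • c

/-- The abelianization homomorphism from the free associative algebra to the commutative
polynomial algebra, sending each generator to the corresponding variable.  Its kernel is the
commutator ideal. -/
noncomputable def abelianization (K : Type) [Field K] (n : ℕ) :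
    FreeAlgebra K (Fin n) →ₐ[K] MvPolynomial (Fin n) K :=
  FreeAlgebra.lift K fun i => (MvPolynomial.X i : MvPolynomial (Fin n) K)


/-!
Filter the free algebra by word length. The commutator ideal lies in the span of the words of
length `≥ 2`, so each `σ t` acts on a word `w` by the character `t ^ weight w` modulo longer
words. By regularity and Dedekind's independence of characters,
`σ t (z i) = ∑ m, t ^ m • a i m` with each `a i m` a weight vector of weight `m`; the component
`w i = a i (single i 1)` has weight `single i 1` and agrees with `z i` modulo words of length
`≥ 2`. The endomorphism `β : z i ↦ w i` is unitriangular for word length, hence injective.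
A weight vector of weight `m` is determined by its coefficients on words of weight `m` (compare
shortest words), and `β` of those words realises every such coefficient vector, so every weight
space lies in the range of `β`. As `z i` is the sum of the weight vectors `a i m`, `β` is onto,
and `β⁻¹ ∘ σ t ∘ β` scales `z i` by `t i`.
-/

section TorusCharacter

variable {K : Type*} [Field K] {J : Type*} [Fintype J]

def torusChar (m : J → ℤ) : (J → Kˣ) →* Kˣ where
  toFun t := ∏ j, t j ^ m j
  map_one' := by simp
  map_mul' t s := by simp only [Pi.mul_apply, mul_zpow, Finset.prod_mul_distrib]

lemma torusChar_apply (m : J → ℤ) (t : J → Kˣ) : torusChar m t = ∏ j, t j ^ m j := rfl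

lemma torusChar_add (m m' : J → ℤ) (t : J → Kˣ) :
    torusChar (m + m') t = torusChar m t * torusChar m' t := by
  simp only [torusChar_apply, Pi.add_apply, zpow_add, Finset.prod_mul_distrib]

@[simp]
lemma torusChar_zero (t : J → Kˣ) : torusChar 0 t = 1 := by simp [torusChar_apply]

@[simp]
lemma torusChar_single [DecidableEq J] (i : J) (t : J → Kˣ) :
    torusChar (Pi.single i 1) t = t i := by
  rw [torusChar_apply, Fintype.prod_eq_single i fun j hj => by simp [hj]]
  simp

lemma torusChar_mulSingle [DecidableEq J] (m : J → ℤ) (j : J) (u : Kˣ) :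
    torusChar m (Pi.mulSingle j u) = u ^ m j := by
  rw [torusChar_apply, Fintype.prod_eq_single j fun j' hj' => by simp [hj']]
  simp

lemma exists_zpow_ne_one [Infinite K] {k : ℤ} (hk : k ≠ 0) : ∃ u : Kˣ, u ^ k ≠ 1 := by
  by_contra! h
  have hroots :
      (Set.univ : Set K) ⊆ insert 0 {x | x ∈ Polynomial.nthRoots k.natAbs (1 : K)} := by
    intro x _
    rcases eq_or_ne x 0 with rfl | hx
    · exact Set.mem_insert _ _
    · refine Set.mem_insert_of_mem _ ((Polynomial.mem_nthRoots (Int.natAbs_pos.2 hk)).2 ?_)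
      simpa using congrArg Units.val (pow_natAbs_eq_one.2 (h (Units.mk0 x hx)))
  exact Set.infinite_univ (((Multiset.finite_toSet _).insert 0).subset hroots)

variable [Infinite K]

lemma torusChar_injective :
    Function.Injective (torusChar : (J → ℤ) → (J → Kˣ) →* Kˣ) := by
  classical
  intro m m' h
  by_contra hne
  obtain ⟨j, hj⟩ := Function.ne_iff.1 hne
  obtain ⟨u, hu⟩ := exists_zpow_ne_one (K := K) (sub_ne_zero.2 hj)
  have := DFunLike.congr_fun h (Pi.mulSingle j u)
  rw [torusChar_mulSingle, torusChar_mulSingle] at this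
  exact hu (by rw [zpow_sub, this, mul_inv_cancel])

/-- Dedekind's independence of characters, in vector-valued form. -/
lemma eqOn_of_forall_sum_torusChar_smul_eq {V : Type*} [AddCommGroup V] [Module K V]
    {S : Finset (J → ℤ)} {v v' : (J → ℤ) → V}
    (h : ∀ t : J → Kˣ,
      ∑ m ∈ S, (torusChar m t : K) • v m = ∑ m ∈ S, (torusChar m t : K) • v' m) :
    ∀ m ∈ S, v m = v' m := by
  have hli := (linearIndependent_monoidHom (J → Kˣ) K).comp
    (fun m => (Units.coeHom K).comp (torusChar m))
    fun m m' hm => torusChar_injective (MonoidHom.ext fun t => Units.ext (DFunLike.congr_fun hm t))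
  intro m hm
  rw [← sub_eq_zero, ← Module.forall_dual_apply_eq_zero_iff K]
  intro f
  refine linearIndependent_iff'.1 hli S (fun m => f (v m - v' m)) (funext fun t => ?_) m hm
  have := congrArg f (h t)
  simp only [map_sum, map_smul, smul_eq_mul] at this
  simp only [Finset.sum_apply, Pi.smul_apply, Function.comp_apply, MonoidHom.coe_comp,
    Units.coeHom_apply, smul_eq_mul, Pi.zero_apply, map_sub, sub_mul, Finset.sum_sub_distrib]
  simp_rw [mul_comm (f _), this, sub_self]

end TorusCharacter

section WeightSpace

variable {K : Type*} [Field K] {J : Type*} [Fintype J] {A : Type*} [Ring A] [Algebra K A]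
  (σ : (J → Kˣ) →* (A ≃ₐ[K] A))

def weightSpace (m : J → ℤ) : Submodule K A where
  carrier := {u | ∀ t, σ t u = (torusChar m t : K) • u}
  add_mem' hu hv t := by rw [map_add, hu t, hv t, smul_add]
  zero_mem' t := by rw [map_zero, smul_zero]
  smul_mem' c u hu t := by rw [map_smul, hu t, smul_comm]

variable {σ}

lemma one_mem_weightSpace_zero : (1 : A) ∈ weightSpace σ 0 := fun t => by simp

lemma mul_mem_weightSpace {m m' : J → ℤ} {u v : A} (hu : u ∈ weightSpace σ m)
    (hv : v ∈ weightSpace σ m') : u * v ∈ weightSpace σ (m + m') := fun t => by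
  rw [map_mul, hu t, hv t, torusChar_add, Units.val_mul, smul_mul_smul_comm]

variable [Infinite K] {x : A} {a : (J → ℤ) →₀ A}
  (ha : ∀ t, σ t x = a.sum fun m c => (torusChar m t : K) • c)
include ha

lemma coeff_mem_weightSpace_of_orbit_eq (m : J → ℤ) : a m ∈ weightSpace σ m := by
  by_cases hm : m ∈ a.support
  swap
  · rw [Finsupp.notMem_support_iff.1 hm]; exact zero_mem _
  intro s
  refine eqOn_of_forall_sum_torusChar_smul_eq (K := K) (V := A)
    (v := fun m => σ s (a m)) (v' := fun m => (torusChar m s : K) • a m) (fun t => ?_) m hm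
  calc ∑ m ∈ a.support, (torusChar m t : K) • σ s (a m)
      = σ s (σ t x) := by simp only [ha t, Finsupp.sum, map_sum, map_smul]
    _ = σ (s * t) x := by rw [map_mul, AlgEquiv.mul_apply]
    _ = ∑ m ∈ a.support, (torusChar m t : K) • (torusChar m s : K) • a m := by
      rw [ha, Finsupp.sum]
      exact Finset.sum_congr rfl fun m _ => by rw [map_mul, Units.val_mul, mul_comm, mul_smul]

lemma map_coeff_eq_of_orbit_eq {V : Type*} [AddCommGroup V] [Module K V] (L : A →ₗ[K] V)
    {m₀ : J → ℤ} {v : V} (hL : ∀ t, L (σ t x) = (torusChar m₀ t : K) • v) :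
    L (a m₀) = v := by
  classical
  have key := eqOn_of_forall_sum_torusChar_smul_eq (K := K) (S := insert m₀ a.support)
    (v := fun m => L (a m)) (v' := Pi.single m₀ v) (fun t => ?_) m₀ (Finset.mem_insert_self _ _)
  · simpa using key
  calc ∑ m ∈ insert m₀ a.support, (torusChar m t : K) • L (a m)
      = L (σ t x) := by
        rw [ha t, Finsupp.sum, map_sum, Finset.sum_insert_of_eq_zero_if_notMem fun h => by
          simp [Finsupp.notMem_support_iff.1 h]]
        simp only [map_smul]
    _ = ∑ m ∈ insert m₀ a.support, (torusChar m t : K) • Pi.single m₀ v m := by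
        rw [hL t, Finset.sum_eq_single_of_mem m₀ (Finset.mem_insert_self _ _) fun m _ hm => by
          simp [hm], Pi.single_eq_same]

lemma mem_iSup_weightSpace_of_orbit_eq : x ∈ ⨆ m, weightSpace σ m := by
  have hx : x = a.sum fun _ c => c := by simpa using ha 1
  rw [hx]
  exact Submodule.finsuppSum_mem _ _ _ _ fun m _ =>
    Submodule.mem_iSup_of_mem m (coeff_mem_weightSpace_of_orbit_eq ha m)

end WeightSpace

namespace FreeMonoid

variable {X : Type*} [DecidableEq X]

noncomputable def multidegree (w : FreeMonoid X) : X →₀ ℕ :=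
  Multiset.toFinsupp (w.toList : Multiset X)

@[simp]
lemma multidegree_one : multidegree (1 : FreeMonoid X) = 0 := by simp [multidegree]

@[simp]
lemma multidegree_of (x : X) : multidegree (of x) = Finsupp.single x 1 := by simp [multidegree]

@[simp]
lemma multidegree_mul (w w' : FreeMonoid X) :
    multidegree (w * w') = multidegree w + multidegree w' := by
  simp [multidegree, ← Multiset.coe_add]

lemma multidegree_eq_iff_perm {w w' : FreeMonoid X} :
    multidegree w = multidegree w' ↔ w.toList.Perm w'.toList :=
  Multiset.toFinsupp.injective.eq_iff.trans Multiset.coe_eq_coe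

lemma eq_of_multidegree_eq_of_length_le_one {w w' : FreeMonoid X} (hw' : w'.length ≤ 1)
    (h : multidegree w = multidegree w') : w = w' := by
  have hperm := multidegree_eq_iff_perm.1 h
  apply toList.injective
  rcases hl : w'.toList with _ | ⟨x, _ | ⟨y, l⟩⟩
  · simpa [hl] using hperm
  · simpa [hl] using hperm
  · simp [length, hl] at hw'

def weight (w : FreeMonoid X) : X → ℤ := fun j => w.toList.count j

@[simp]
lemma weight_one : weight (1 : FreeMonoid X) = 0 := by
  ext j; simp [weight]

@[simp]
lemma weight_of (x : X) : weight (of x) = Pi.single x 1 := by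
  ext j
  by_cases h : j = x <;> simp [weight, h, Ne.symm]

@[simp]
lemma weight_mul (w w' : FreeMonoid X) : weight (w * w') = weight w + weight w' := by
  ext j; simp [weight]

lemma length_eq_of_weight_eq {w w' : FreeMonoid X} (h : weight w = weight w') :
    w.length = w'.length :=
  (List.perm_iff_count.2 fun j => by simpa [weight] using congr_fun h j).length_eq

lemma torusChar_weight {K : Type*} [Field K] [Fintype X] (t : X → Kˣ) (w : FreeMonoid X) :
    torusChar (weight w) t = lift t w := by
  induction w using FreeMonoid.recOn with
  | one => simp
  | of_mul x w ih => simp [torusChar_add, ih]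

end FreeMonoid

namespace FreeAlgebra

open FreeMonoid

section WordFiltration

variable {R : Type*} [CommRing R] {X : Type*}

lemma basisFreeMonoid_apply (w : FreeMonoid X) :
    basisFreeMonoid R X w = FreeMonoid.lift (ι R) w := by
  simp [basisFreeMonoid, equivMonoidAlgebraFreeMonoid]

lemma basisFreeMonoid_mul (w w' : FreeMonoid X) :
    basisFreeMonoid R X (w * w') = basisFreeMonoid R X w * basisFreeMonoid R X w' := by
  simp only [basisFreeMonoid_apply, map_mul]

lemma basisFreeMonoid_of (x : X) : basisFreeMonoid R X (.of x) = ι R x := by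
  rw [basisFreeMonoid_apply, FreeMonoid.lift_eval_of]

variable (R) in
def wordFiltration (d : ℕ) : Submodule R (FreeAlgebra R X) :=
  Submodule.span R (basisFreeMonoid R X '' {w | d ≤ w.length})

lemma mem_wordFiltration {d : ℕ} {u : FreeAlgebra R X} :
    u ∈ wordFiltration R d ↔ ∀ w ∈ ((basisFreeMonoid R X).repr u).support, d ≤ w.length :=
  (basisFreeMonoid R X).mem_span_image

lemma wordFiltration_antitone : Antitone (wordFiltration R (X := X)) :=
  fun _ _ h => Submodule.span_mono (Set.image_mono fun _ hw => le_trans h hw)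

lemma basisFreeMonoid_mem_wordFiltration (w : FreeMonoid X) :
    basisFreeMonoid R X w ∈ wordFiltration R w.length :=
  Submodule.subset_span ⟨w, le_refl w.length, rfl⟩

lemma ι_mem_wordFiltration_one (x : X) : ι R x ∈ wordFiltration R 1 := by
  simpa [basisFreeMonoid_of] using basisFreeMonoid_mem_wordFiltration (R := R) (.of x)

lemma mul_mem_wordFiltration {a b : ℕ} {u v : FreeAlgebra R X} (hu : u ∈ wordFiltration R a)
    (hv : v ∈ wordFiltration R b) : u * v ∈ wordFiltration R (a + b) := by
  have hle : wordFiltration R a * wordFiltration R b ≤ wordFiltration R (X := X) (a + b) := by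
    rw [wordFiltration, wordFiltration, Submodule.span_mul_span]
    refine Submodule.span_mono ?_
    rintro _ ⟨_, ⟨w, hw, rfl⟩, _, ⟨w', hw', rfl⟩, rfl⟩
    exact ⟨w * w', by simpa using add_le_add hw hw', basisFreeMonoid_mul w w'⟩
  exact hle (Submodule.mul_mem_mul hu hv)

lemma repr_eq_zero_of_mem_wordFiltration {d : ℕ} {u : FreeAlgebra R X}
    (hu : u ∈ wordFiltration R d) {w : FreeMonoid X} (hw : w.length < d) :
    (basisFreeMonoid R X).repr u w = 0 :=
  Finsupp.notMem_support_iff.1 fun hmem => hw.not_ge (mem_wordFiltration.1 hu w hmem)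

lemma exists_mem_support_mem_wordFiltration_length {u : FreeAlgebra R X} (hu : u ≠ 0) :
    ∃ w ∈ ((basisFreeMonoid R X).repr u).support, u ∈ wordFiltration R w.length := by
  have hne : ((basisFreeMonoid R X).repr u).support.Nonempty := by
    simpa [Finsupp.support_nonempty_iff] using hu
  obtain ⟨w, hw, hmin⟩ := Finset.exists_min_image _ FreeMonoid.length hne
  exact ⟨w, hw, mem_wordFiltration.2 hmin⟩

lemma map_basisFreeMonoid_sub_smul_mem_wordFiltration
    (φ : FreeAlgebra R X →ₐ[R] FreeAlgebra R X) (c : FreeMonoid X →* R)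
    (h : ∀ x, φ (ι R x) - c (.of x) • ι R x ∈ wordFiltration R 2) (w : FreeMonoid X) :
    φ (basisFreeMonoid R X w) - c w • basisFreeMonoid R X w ∈
      wordFiltration R (w.length + 1) := by
  induction w using FreeMonoid.recOn with
  | one => simp [basisFreeMonoid_apply]
  | of_mul x w ih =>
    set E := φ (ι R x) - c (.of x) • ι R x
    set F := φ (basisFreeMonoid R X w) - c w • basisFreeMonoid R X w
    have hexpand :
        φ (basisFreeMonoid R X (.of x * w)) - c (.of x * w) • basisFreeMonoid R X (.of x * w) =
          c (.of x) • ι R x * F + (E * (c w • basisFreeMonoid R X w) + E * F) := by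
      rw [basisFreeMonoid_mul, basisFreeMonoid_of, map_mul, map_mul,
        ← sub_add_cancel (φ (ι R x)) (c (.of x) • ι R x),
        ← sub_add_cancel (φ (basisFreeMonoid R X w)) (c w • basisFreeMonoid R X w),
        add_mul, mul_add, mul_add, smul_mul_smul_comm]
      abel
    have hlen : (FreeMonoid.of x * w).length + 1 = 1 + (w.length + 1) := by
      simp [add_comm]
    rw [hexpand, hlen]
    refine add_mem
      (mul_mem_wordFiltration (Submodule.smul_mem _ _ (ι_mem_wordFiltration_one x)) ih)
      (add_mem ?_ ?_)
    · exact wordFiltration_antitone (by omega) (mul_mem_wordFiltration (h x)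
        (Submodule.smul_mem _ _ (basisFreeMonoid_mem_wordFiltration w)))
    · exact wordFiltration_antitone (by omega) (mul_mem_wordFiltration (h x) ih)

lemma repr_map_of_sub_smul_mem_wordFiltration (φ : FreeAlgebra R X →ₗ[R] FreeAlgebra R X)
    (c : FreeMonoid X → R)
    (h : ∀ w, φ (basisFreeMonoid R X w) - c w • basisFreeMonoid R X w ∈
      wordFiltration R (w.length + 1))
    {d : ℕ} {u : FreeAlgebra R X} (hu : u ∈ wordFiltration R d) {w₀ : FreeMonoid X}
    (hw₀ : w₀.length ≤ d) :
    (basisFreeMonoid R X).repr (φ u) w₀ = c w₀ * (basisFreeMonoid R X).repr u w₀ := by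
  set b := basisFreeMonoid R X
  have hterm : ∀ w ∈ (b.repr u).support,
      b.repr (φ (b w)) w₀ = c w * Finsupp.single w 1 w₀ := by
    intro w hw
    have herr := repr_eq_zero_of_mem_wordFiltration (h w) (w := w₀)
      (Nat.lt_succ_of_le (hw₀.trans (mem_wordFiltration.1 hu w hw)))
    rwa [map_sub, Finsupp.sub_apply, sub_eq_zero, map_smul, b.repr_self, Finsupp.smul_apply,
      smul_eq_mul] at herr
  conv_lhs => rw [← b.linearCombination_repr u, Finsupp.linearCombination_apply]
  rw [Finsupp.sum, map_sum, map_sum, Finset.sum_apply',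
    Finset.sum_congr rfl fun w hw => by
      rw [map_smul, map_smul, Finsupp.smul_apply, hterm w hw, smul_eq_mul],
    Finset.sum_eq_single w₀
      (fun w _ hw => by rw [Finsupp.single_eq_of_ne hw.symm, mul_zero, mul_zero])
      (fun hw₀ => by simp [Finsupp.notMem_support_iff.1 hw₀])]
  simp [mul_comm]

lemma injective_of_ι_sub_mem_wordFiltration (φ : FreeAlgebra R X →ₐ[R] FreeAlgebra R X)
    (h : ∀ x, φ (ι R x) - ι R x ∈ wordFiltration R 2) : Function.Injective φ := by
  rw [injective_iff_map_eq_zero]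
  intro u hu
  by_contra hne
  obtain ⟨w, hw, hmin⟩ := exists_mem_support_mem_wordFiltration_length hne
  have hlead := repr_map_of_sub_smul_mem_wordFiltration φ.toLinearMap (1 : FreeMonoid X →* R)
    (map_basisFreeMonoid_sub_smul_mem_wordFiltration φ 1 (by simpa using h)) hmin le_rfl
  rw [AlgHom.toLinearMap_apply, hu, map_zero, MonoidHom.one_apply, one_mul] at hlead
  exact Finsupp.mem_support_iff.1 hw hlead.symm

section Multidegree

variable [DecidableEq X]

lemma lift_X_basisFreeMonoid (w : FreeMonoid X) :
    lift R (MvPolynomial.X (R := R)) (basisFreeMonoid R X w) =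
      MvPolynomial.monomial (multidegree w) 1 := by
  induction w using FreeMonoid.recOn with
  | one => simp [basisFreeMonoid_apply]
  | of_mul x w ih =>
    rw [basisFreeMonoid_mul, map_mul, ih, basisFreeMonoid_of, lift_ι_apply, multidegree_mul,
      multidegree_of, MvPolynomial.X, MvPolynomial.monomial_mul, one_mul]

lemma repr_eq_coeff_lift_X {w₀ : FreeMonoid X}
    (h : ∀ w, multidegree w = multidegree w₀ → w = w₀) (u : FreeAlgebra R X) :
    (basisFreeMonoid R X).repr u w₀ =
      (lift R (MvPolynomial.X (R := R)) u).coeff (multidegree w₀) := by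
  have hext : (basisFreeMonoid R X).coord w₀ =
      MvPolynomial.lcoeff R (multidegree w₀) ∘ₗ
        (lift R (MvPolynomial.X (R := R))).toLinearMap :=
    (basisFreeMonoid R X).ext fun w => by
      rcases eq_or_ne w w₀ with rfl | hw
      · simp [lift_X_basisFreeMonoid]
      · simp only [Module.Basis.coord_apply, Module.Basis.repr_self, LinearMap.coe_comp,
          Function.comp_apply, AlgHom.toLinearMap_apply, lift_X_basisFreeMonoid,
          MvPolynomial.lcoeff_apply, MvPolynomial.coeff_monomial]
        rw [Finsupp.single_eq_of_ne hw.symm, if_neg fun h' => hw (h w h')]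
  exact LinearMap.congr_fun hext u

end Multidegree

lemma mem_wordFiltration_two_of_lift_X_eq_zero {u : FreeAlgebra R X}
    (hu : lift R (MvPolynomial.X (R := R)) u = 0) : u ∈ wordFiltration R 2 := by
  classical
  refine mem_wordFiltration.2 fun w hw => ?_
  by_contra! hlt
  rw [Finsupp.mem_support_iff,
    repr_eq_coeff_lift_X (fun w' => eq_of_multidegree_eq_of_length_le_one (by omega)), hu,
    MvPolynomial.coeff_zero] at hw
  exact hw rfl

end WordFiltration

section Weights

variable {K : Type*} [Field K] {X : Type*} [Fintype X] [DecidableEq X]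
  {σ : (X → Kˣ) →* (FreeAlgebra K X ≃ₐ[K] FreeAlgebra K X)}

lemma map_basisFreeMonoid_mem_weightSpace (β : FreeAlgebra K X →ₐ[K] FreeAlgebra K X)
    (hβ : ∀ x, β (ι K x) ∈ weightSpace σ (Pi.single x 1)) (w : FreeMonoid X) :
    β (basisFreeMonoid K X w) ∈ weightSpace σ (weight w) := by
  induction w using FreeMonoid.recOn with
  | one => simpa [basisFreeMonoid_apply] using one_mem_weightSpace_zero
  | of_mul x w ih =>
    simpa [basisFreeMonoid_mul, basisFreeMonoid_of] using mul_mem_weightSpace (hβ x) ih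

variable [Infinite K] (hσ : ∀ t x, σ t (ι K x) - (t x : K) • ι K x ∈ wordFiltration K 2)
include hσ

lemma weight_eq_of_mem_weightSpace {m : X → ℤ} {u : FreeAlgebra K X}
    (hu : u ∈ weightSpace σ m) {w₀ : FreeMonoid X}
    (hw₀ : w₀ ∈ ((basisFreeMonoid K X).repr u).support)
    (hmin : u ∈ wordFiltration K w₀.length) :
    weight w₀ = m := by
  refine torusChar_injective (K := K) (MonoidHom.ext fun t => Units.ext ?_)
  have htri := map_basisFreeMonoid_sub_smul_mem_wordFiltration (σ t : FreeAlgebra K X →ₐ[K] _)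
    ((Units.coeHom K).comp (FreeMonoid.lift t)) (by simpa using hσ t)
  have hlead := repr_map_of_sub_smul_mem_wordFiltration (σ t).toLinearMap
    (fun w => (torusChar (weight w) t : K)) (by simpa [torusChar_weight] using htri) hmin le_rfl
  rw [AlgEquiv.toLinearMap_apply, hu t, map_smul, Finsupp.smul_apply, smul_eq_mul] at hlead
  exact (mul_right_cancel₀ (Finsupp.mem_support_iff.1 hw₀) hlead).symm

lemma eq_zero_of_mem_weightSpace {m : X → ℤ} {u : FreeAlgebra K X} (hu : u ∈ weightSpace σ m)
    (h : ∀ w, weight w = m → (basisFreeMonoid K X).repr u w = 0) : u = 0 := by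
  by_contra hne
  obtain ⟨w, hw, hmin⟩ := exists_mem_support_mem_wordFiltration_length hne
  exact Finsupp.mem_support_iff.1 hw (h w (weight_eq_of_mem_weightSpace hσ hu hw hmin))

lemma weightSpace_le_range (β : FreeAlgebra K X →ₐ[K] FreeAlgebra K X)
    (hβ : ∀ x, β (ι K x) - ι K x ∈ wordFiltration K 2)
    (hβσ : ∀ x, β (ι K x) ∈ weightSpace σ (Pi.single x 1)) (m : X → ℤ) :
    weightSpace σ m ≤ Subalgebra.toSubmodule β.range := by
  set b := basisFreeMonoid K X
  have hdiag : ∀ w w', weight w = m → weight w' = m →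
      b.repr (β (b w')) w = Finsupp.single w' 1 w := fun w w' hw hw' => by
    simpa using repr_map_of_sub_smul_mem_wordFiltration β.toLinearMap (1 : FreeMonoid X →* K)
      (map_basisFreeMonoid_sub_smul_mem_wordFiltration β 1 (by simpa using hβ))
      (basisFreeMonoid_mem_wordFiltration w') (length_eq_of_weight_eq (hw.trans hw'.symm)).le
  intro u hu
  set S := ((b.repr u).support.filter fun w => weight w = m)
  have hproj : u - ∑ w ∈ S, b.repr u w • β (b w) = 0 := by
    have hS : ∑ w ∈ S, b.repr u w • β (b w) ∈ weightSpace σ m :=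
      sum_mem fun w hw => Submodule.smul_mem _ _
        ((Finset.mem_filter.1 hw).2 ▸ map_basisFreeMonoid_mem_weightSpace β hβσ w)
    refine eq_zero_of_mem_weightSpace hσ (sub_mem hu hS) fun w hw => ?_
    rw [map_sub, map_sum, Finsupp.sub_apply, Finsupp.finsetSum_apply, sub_eq_zero]
    simp_rw [map_smul, Finsupp.smul_apply, smul_eq_mul]
    rw [Finset.sum_congr rfl fun w' hw' => by rw [hdiag w w' hw (Finset.mem_filter.1 hw').2],
      Finset.sum_eq_single w (fun w' _ hw' => by rw [Finsupp.single_eq_of_ne hw'.symm, mul_zero])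
        (fun hwS => by
          rw [Finsupp.notMem_support_iff.1 fun hws => hwS (Finset.mem_filter.2 ⟨hws, hw⟩),
            zero_mul]),
      Finsupp.single_eq_same, mul_one]
  rw [sub_eq_zero] at hproj
  rw [Subalgebra.mem_toSubmodule, hproj]
  exact Subalgebra.sum_mem _ fun w _ => Subalgebra.smul_mem _ (β.mem_range_self (b w)) _

lemma lift_bijective {w : X → FreeAlgebra K X} (hw : ∀ x, w x - ι K x ∈ wordFiltration K 2)
    (hwσ : ∀ x, w x ∈ weightSpace σ (Pi.single x 1))
    (hgen : ∀ x, ι K x ∈ ⨆ m, weightSpace σ m) :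
    Function.Bijective (lift K w) := by
  simp_rw [← lift_ι_apply (R := K) w] at hw hwσ
  refine ⟨injective_of_ι_sub_mem_wordFiltration _ hw, (AlgHom.range_eq_top _).1 ?_⟩
  have hle := iSup_le (weightSpace_le_range hσ (lift K w) hw hwσ)
  rw [eq_top_iff, ← adjoin_range_ι, Algebra.adjoin_le_iff]
  rintro _ ⟨x, rfl⟩
  exact hle (hgen x)

end Weights

end FreeAlgebra

theorem lift_of_standard_torus_action_is_standard_general
    {K : Type} [Field K] [IsAlgClosed K] {n : ℕ}
    (σ : (Fin n → Kˣ) →* (FreeAlgebra K (Fin n) ≃ₐ[K] FreeAlgebra K (Fin n)))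
    (hreg : TorusActionIsRegular σ)
    (hlift : ∀ (t : Fin n → Kˣ) (i : Fin n),
      σ t (ι K i) - ((t i : K) • ι K i) ∈ RingHom.ker (abelianization K n).toRingHom) :
    ∃ β : FreeAlgebra K (Fin n) ≃ₐ[K] FreeAlgebra K (Fin n),
      ∀ (t : Fin n → Kˣ) (i : Fin n),
        β.symm (σ t (β (ι K i))) = (t i : K) • ι K i := by
  have hσ t i : σ t (ι K i) - (t i : K) • ι K i ∈ wordFiltration K 2 :=
    mem_wordFiltration_two_of_lift_X_eq_zero (hlift t i)
  choose a ha using hreg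
  let w : Fin n → FreeAlgebra K (Fin n) := fun i => a i (Pi.single i 1)
  have hwσ i : w i ∈ weightSpace σ (Pi.single i 1) := coeff_mem_weightSpace_of_orbit_eq (ha i) _
  have hw i : w i - ι K i ∈ wordFiltration K 2 := by
    refine mem_wordFiltration_two_of_lift_X_eq_zero ?_
    rw [map_sub, lift_ι_apply, sub_eq_zero]
    refine map_coeff_eq_of_orbit_eq (ha i) (abelianization K n).toLinearMap fun t => ?_
    simpa [sub_eq_zero, abelianization] using hlift t i
  let β := AlgEquiv.ofBijective _
    (lift_bijective hσ hw hwσ fun i => mem_iSup_weightSpace_of_orbit_eq (ha i))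
  have hβ i : β (ι K i) = w i := lift_ι_apply _ _
  refine ⟨β, fun t i => ?_⟩
  rw [hβ, hwσ i t, torusChar_single, map_smul, ← hβ, AlgEquiv.symm_apply_apply]

/-- If an effective regular action `σ` of the `n`-torus on the free algebra lifts the standard
torus action on the polynomial algebra (i.e. `σ(t)(z_i) − t_i • z_i` lies in the commutator
ideal for all `t, i`), then `σ` is conjugate to the standard action:  there is an algebra
automorphism `β` with `(β⁻¹ ∘ σ(t) ∘ β)(z_i) = t_i • z_i` for all `t` and `i`. -/
theorem lift_of_standard_torus_action_is_standard
    {K : Type} [Field K] [IsAlgClosed K] {n : ℕ} (hn : 1 ≤ n)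
    (σ : (Fin n → Kˣ) →* (FreeAlgebra K (Fin n) ≃ₐ[K] FreeAlgebra K (Fin n)))
    (hreg : TorusActionIsRegular σ)
    (heff : Function.Injective σ)
    (hlift : ∀ (t : Fin n → Kˣ) (i : Fin n),
      σ t (ι K i) - ((t i : K) • ι K i) ∈ RingHom.ker (abelianization K n).toRingHom) :
    ∃ β : FreeAlgebra K (Fin n) ≃ₐ[K] FreeAlgebra K (Fin n),
      ∀ (t : Fin n → Kˣ) (i : Fin n),
        β.symm (σ t (β (ι K i))) = (t i : K) • ι K i :=
  lift_of_standard_torus_action_is_standard_general σ hreg hlift
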